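/- Let (V, θ, d_V) be a representation of a modified λ-differential Lie triple system (L, [·,·,·], d). For f ∈ C¹(L,V) = Hom(L,V) define δf(a₁,a₂,a₃) = θ(a₂,a₃)f(a₁) − θ(a₁,a₃)f(a₂) + D(a₁,a₂)f(a₃) − f([a₁,a₂,a₃]) and Φf(a) = f(d(a)) − d_V(f(a)). Then Φ(δf) = δ(Φf) as elements of C³(L,V), i.e., for all a₁,a₂,a₃: δf(d(a₁),a₂,a₃) + δf(a₁,d(a₂),a₃) + δf(a₁,a₂,d(a₃)) + λδf(a₁,a₂,a₃) − d_V(δf(a₁,a₂,a₃)) = θ(a₂,a₃)Φf(a₁) − θ(a₁,a₃)Φf(a₂) + D(a₁,a₂)Φf(a₃) − Φf([a₁,a₂,a₃]). -/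
import Mathlib


/-- The Yamaguti coboundary on 1-cochains:
`δf(a₁,a₂,a₃) = θ(a₂,a₃)f(a₁) − θ(a₁,a₃)f(a₂) + D(a₁,a₂)f(a₃) − f([a₁,a₂,a₃])`. -/
def delta1 {K L V : Type*} [Field K]
    [AddCommGroup L] [Module K L] [AddCommGroup V] [Module K V]
    (br : L →ₗ[K] L →ₗ[K] L →ₗ[K] L) (θ : L →ₗ[K] L →ₗ[K] V →ₗ[K] V)
    (f : L → V) : L → L → L → V :=
  fun a₁ a₂ a₃ =>
    θ a₂ a₃ (f a₁) - θ a₁ a₃ (f a₂) + (θ a₂ a₁ (f a₃) - θ a₁ a₂ (f a₃))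
      - f (br a₁ a₂ a₃)

/-- The map `Φ` on 1-cochains: `Φf = f∘d − d_V∘f`. -/
def phi1 {K L V : Type*} [Field K]
    [AddCommGroup L] [Module K L] [AddCommGroup V] [Module K V]
    (d : L →ₗ[K] L) (dV : V →ₗ[K] V) (f : L → V) : L → V :=
  fun a => f (d a) - dV (f a)

/-- `Φ` is a cochain map in degree 1: `Φ(δf) = δ(Φf)`. -/
theorem phi_cochain_map_deg_one
    {K L V : Type*} [Field K] [CharZero K]
    [AddCommGroup L] [Module K L] [AddCommGroup V] [Module K V]
    (br : L →ₗ[K] L →ₗ[K] L →ₗ[K] L) (lam : K)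
    (hskew : ∀ x y z : L, br x y z + br y x z = 0)
    (hcyc : ∀ x y z : L, br x y z + br z x y + br y z x = 0)
    (hfund : ∀ a b x y z : L,
      br a b (br x y z) = br (br a b x) y z + br x (br a b y) z + br x y (br a b z))
    (θ : L →ₗ[K] L →ₗ[K] V →ₗ[K] V)
    (hrep1 : ∀ x y a b : L, ∀ v : V,
      θ a b (θ x y v) - θ y b (θ x a v) - θ x (br y a b) v
        + (θ a y (θ x b v) - θ y a (θ x b v)) = 0)
    (hrep2 : ∀ x y a b : L, ∀ v : V,
      θ a b (θ y x v - θ x y v) - (θ y x (θ a b v) - θ x y (θ a b v))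
        + θ (br x y a) b v + θ a (br x y b) v = 0)
    (d : L →ₗ[K] L)
    (hd : ∀ a b c : L,
      d (br a b c) = br (d a) b c + br a (d b) c + br a b (d c) + lam • br a b c)
    (dV : V →ₗ[K] V)
    (hdV : ∀ x y : L, ∀ v : V,
      dV (θ x y v) = θ (d x) y v + θ x (d y) v + θ x y (dV v) + lam • θ x y v)
    (f : L →ₗ[K] V) :
    ∀ a₁ a₂ a₃ : L,
      delta1 br θ f (d a₁) a₂ a₃ + delta1 br θ f a₁ (d a₂) a₃
        + delta1 br θ f a₁ a₂ (d a₃) + lam • delta1 br θ f a₁ a₂ a₃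
        - dV (delta1 br θ f a₁ a₂ a₃)
      = θ a₂ a₃ (phi1 d dV f a₁) - θ a₁ a₃ (phi1 d dV f a₂)
          + (θ a₂ a₁ (phi1 d dV f a₃) - θ a₁ a₂ (phi1 d dV f a₃))
          - phi1 d dV f (br a₁ a₂ a₃) := by
  intro a₁ a₂ a₃
  simp only [delta1, phi1, hd, hdV, map_add, map_sub, map_smul, smul_sub, smul_add]
  abel
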